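/- arXiv:1805.04219 — 3 statements merged into one kernel-verified Lean document; each statement's English description precedes it below -/
import Mathlib

section
/- Let Λ be a finite distributive lattice, let n ≥ 0, and for each i ∈ {1,…,n} fix elements Eᵢ ≤ Fᵢ of Λ with Eᵢ meet-irreducible. Let K be the class of all structures (A, d, R₁, …, Rₙ) where (A,d) is a finite Λ-ultrametric space and each Rᵢ is a subquotient order on A from Eᵢ to Fᵢ; an embedding of such structures is an isometry f that additionally satisfies Rᵢ x y ↔ Rᵢ (f x) (f y) for every i and all x,y. Then K has the amalgamation property. -/
/-!
Glue `B₁` and `B₂` along `A` on `B₁ ⊕ B₂`. Across the two sides the distance is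
`⨅ a, d₁ x (f₁ a) ⊔ d₂ (f₂ a) y`, which satisfies the ultrametric inequality by distributivity;
points at distance `⊥` are identified at the end. For the orders, write `≼` for "`<` or
`E`-close". Across the sides, `x ∈ B₁` is put below `y ∈ B₂` when `x ≼ f₁ a ≼ y` through some
`a ∈ A` with one step strict, and above it otherwise, always within the window `E < d ≤ F`.
This relation is total on the window, so it is a subquotient order as soon as it has no
cycles, not even cycles closed up to `E`-closeness. Because `E` is meet-irreducible, points on
different sides that are `E`-close are both `E`-close to a common point of `A`, and through that
point every cycle becomes a cycle of `R₁` or of `R₂`.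
-/

/-- A `Λ`-ultrametric on `X`. -/
def IsLambdaUltrametric {Λ X : Type*} [Lattice Λ] [OrderBot Λ]
    (d : X → X → Λ) : Prop :=
  (∀ x y, d x y = ⊥ ↔ x = y) ∧ (∀ x y, d x y = d y x) ∧
  (∀ x y z, d x z ≤ d x y ⊔ d y z)

/-- A subquotient order from `E` to `F` on a `Λ`-ultrametric space `(X, d)`:
a transitive relation comparing `x` and `y` exactly when `d x y ≤ F` but
`¬ d x y ≤ E`, and for which `E`-closeness is a congruence. -/
def IsSubquotientOrder {Λ X : Type*} [Lattice Λ] (d : X → X → Λ) (E F : Λ)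
    (R : X → X → Prop) : Prop :=
  (∀ x y z, R x y → R y z → R x z) ∧
  (∀ x y, (R x y ∨ R y x) ↔ (d x y ≤ F ∧ ¬ d x y ≤ E)) ∧
  (∀ x x' y y', d x x' ≤ E → d y y' ≤ E → (R x y ↔ R x' y'))

/-- `E` is meet-irreducible in the lattice `Λ`. -/
def MeetIrreducible {Λ : Type*} [Lattice Λ] (E : Λ) : Prop :=
  ∀ y z, E = y ⊓ z → E = y ∨ E = z

variable {Λ X : Type*}

structure IsLambdaPseudoUltrametric [Lattice Λ] [OrderBot Λ] (d : X → X → Λ) : Prop where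
  self_eq_bot : ∀ x, d x x = ⊥
  symm : ∀ x y, d x y = d y x
  triangle : ∀ x y z, d x z ≤ d x y ⊔ d y z

theorem IsLambdaUltrametric.isLambdaPseudoUltrametric [Lattice Λ] [OrderBot Λ]
    {d : X → X → Λ} (hd : IsLambdaUltrametric d) : IsLambdaPseudoUltrametric d :=
  ⟨fun x => (hd.1 x x).2 rfl, hd.2.1, hd.2.2⟩

theorem MeetIrreducible.infPrime [DistribLattice Λ] {E : Λ} (hE : MeetIrreducible E)
    (hmax : ¬ IsMax E) : InfPrime E :=
  infPrime_iff_infIrred.2 ⟨hmax, fun _ _ h => (hE _ _ h.symm).imp Eq.symm Eq.symm⟩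

namespace IsLambdaPseudoUltrametric

variable [Lattice Λ] [OrderBot Λ] {d : X → X → Λ}

theorem triangle_left (hd : IsLambdaPseudoUltrametric d) (x y z : X) :
    d x y ≤ d z x ⊔ d z y :=
  (hd.triangle x z y).trans_eq (by rw [hd.symm x z])

theorem triangle_right (hd : IsLambdaPseudoUltrametric d) (x y z : X) :
    d x y ≤ d x z ⊔ d y z :=
  (hd.triangle x z y).trans_eq (by rw [hd.symm z y])

theorem triangle4 (hd : IsLambdaPseudoUltrametric d) (x y z w : X) :
    d x w ≤ d x y ⊔ d y z ⊔ d z w :=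
  (hd.triangle x z w).trans (sup_le_sup_right (hd.triangle x y z) _)

theorem window_of_dist_le (hd : IsLambdaPseudoUltrametric d) {E F : Λ} (hEF : E ≤ F)
    {u u' v : X} (hu : d u u' ≤ E) (h : d u v ≤ F ∧ ¬ d u v ≤ E) :
    d u' v ≤ F ∧ ¬ d u' v ≤ E :=
  ⟨(hd.triangle u' u v).trans (sup_le (((hd.symm u' u).trans_le hu).trans hEF) h.1),
    fun h' => h.2 ((hd.triangle u u' v).trans (sup_le hu h'))⟩

theorem dist_eq_of_dist_eq_bot (hd : IsLambdaPseudoUltrametric d) {x x' y y' : X}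
    (hx : d x x' = ⊥) (hy : d y y' = ⊥) : d x y = d x' y' := by
  have key : ∀ {x x' y y' : X}, d x x' = ⊥ → d y y' = ⊥ → d x' y' ≤ d x y :=
    fun {x x' y y'} hx hy => (hd.triangle4 x' x y y').trans_eq <| by
      rw [hd.symm x' x, hx, hy, bot_sup_eq, sup_bot_eq]
  exact le_antisymm (key ((hd.symm x' x).trans hx) ((hd.symm y' y).trans hy)) (key hx hy)

def setoid (hd : IsLambdaPseudoUltrametric d) : Setoid X where
  r x y := d x y = ⊥
  iseqv := ⟨hd.self_eq_bot, fun h => (hd.symm _ _).trans h,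
    fun hxy hyz => le_bot_iff.1 ((hd.triangle _ _ _).trans_eq (by rw [hxy, hyz, sup_bot_eq]))⟩

def quotDist (hd : IsLambdaPseudoUltrametric d) :
    Quotient hd.setoid → Quotient hd.setoid → Λ :=
  Quotient.lift₂ d fun _ _ _ _ => hd.dist_eq_of_dist_eq_bot

theorem isLambdaUltrametric_quotDist (hd : IsLambdaPseudoUltrametric d) :
    IsLambdaUltrametric hd.quotDist := by
  refine ⟨fun p q => ?_, fun p q => ?_, fun p q r => ?_⟩
  · induction p, q using Quotient.inductionOn₂
    exact (Quotient.eq (r := hd.setoid)).symm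
  · induction p, q using Quotient.inductionOn₂
    exact hd.symm _ _
  · induction p, q, r using Quotient.inductionOn₃
    exact hd.triangle _ _ _

variable {E F : Λ} {R : X → X → Prop}

def quotRel (hd : IsLambdaPseudoUltrametric d) (hR : IsSubquotientOrder d E F R) :
    Quotient hd.setoid → Quotient hd.setoid → Prop :=
  Quotient.lift₂ R fun _ _ _ _ hx hy =>
    propext (hR.2.2 _ _ _ _ (hx.trans_le bot_le) (hy.trans_le bot_le))

theorem isSubquotientOrder_quotRel (hd : IsLambdaPseudoUltrametric d)
    (hR : IsSubquotientOrder d E F R) : IsSubquotientOrder hd.quotDist E F (hd.quotRel hR) := by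
  refine ⟨fun p q r => ?_, fun p q => ?_, fun p p' q q' => ?_⟩
  · induction p, q, r using Quotient.inductionOn₃
    exact hR.1 _ _ _
  · induction p, q using Quotient.inductionOn₂
    exact hR.2.1 _ _
  · induction p, p' using Quotient.inductionOn₂
    induction q, q' using Quotient.inductionOn₂
    exact hR.2.2 _ _ _ _

end IsLambdaPseudoUltrametric

/-- The order induced by `R` on the quotient by `E`-closeness. -/
def SubquotientLE [Lattice Λ] (d : X → X → Λ) (E : Λ) (R : X → X → Prop) (x y : X) : Prop :=
  R x y ∨ d x y ≤ E

theorem SubquotientLE.refl [Lattice Λ] [OrderBot Λ] {d : X → X → Λ} {E : Λ}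
    {R : X → X → Prop} (hd : IsLambdaPseudoUltrametric d) (x : X) : SubquotientLE d E R x x :=
  Or.inr (hd.self_eq_bot x ▸ bot_le)

theorem SubquotientLE.of_dist_le_symm [Lattice Λ] [OrderBot Λ] {d : X → X → Λ} {E : Λ}
    {R : X → X → Prop} (hd : IsLambdaPseudoUltrametric d) {x y : X} (h : d x y ≤ E) :
    SubquotientLE d E R y x :=
  Or.inr ((hd.symm y x).trans_le h)

namespace IsSubquotientOrder

variable [Lattice Λ] {d : X → X → Λ} {E F : Λ} {R : X → X → Prop} {x y z : X}

theorem not_isMax (hR : IsSubquotientOrder d E F R) (h : R x y) : ¬ IsMax E := fun hmax =>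
  ((hR.2.1 x y).1 (Or.inl h)).2 (le_sup_right.trans (hmax le_sup_left))

variable [OrderBot Λ] (hd : IsLambdaPseudoUltrametric d) (hR : IsSubquotientOrder d E F R)
include hd hR

theorem irrefl : ¬ R x x := fun h =>
  ((hR.2.1 x x).1 (Or.inl h)).2 (hd.self_eq_bot x ▸ bot_le)

theorem lt_of_lt_of_le (hxy : R x y) (hyz : SubquotientLE d E R y z) : R x z :=
  hyz.elim (hR.1 x y z hxy) fun h => (hR.2.2 x x y z (hd.self_eq_bot x ▸ bot_le) h).1 hxy

theorem lt_of_le_of_lt (hxy : SubquotientLE d E R x y) (hyz : R y z) : R x z :=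
  hxy.elim (fun h => hR.1 x y z h hyz) fun h =>
    (hR.2.2 y x z z ((hd.symm y x).trans_le h) (hd.self_eq_bot z ▸ bot_le)).1 hyz

theorem le_trans (hxy : SubquotientLE d E R x y) (hyz : SubquotientLE d E R y z) :
    SubquotientLE d E R x z :=
  hyz.elim (fun h => Or.inl (lt_of_le_of_lt hd hR hxy h)) fun h =>
    hxy.elim (fun h' => Or.inl (lt_of_lt_of_le hd hR h' (Or.inr h))) fun h' =>
      Or.inr ((hd.triangle x y z).trans (sup_le h' h))

theorem not_lt_of_lt_of_dist_le (hxz : d x z ≤ E) (hxy : R x y) : ¬ R y z := fun hyz =>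
  irrefl hd hR (lt_of_lt_of_le hd hR (hR.1 x y z hxy hyz) (.of_dist_le_symm hd hxz))

end IsSubquotientOrder

theorem isSubquotientOrder_of_not_cycle [Lattice Λ] [OrderBot Λ] {d : X → X → Λ} {E F : Λ}
    {S : X → X → Prop} (hd : IsLambdaPseudoUltrametric d) (hEF : E ≤ F)
    (hwin : ∀ u v, (S u v ∨ S v u) ↔ (d u v ≤ F ∧ ¬ d u v ≤ E))
    (hclose : ∀ u v u', d u u' ≤ E → S u v → ¬ S v u')
    (hcycle : ∀ u v w, S u v → S v w → ¬ S w u) :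
    IsSubquotientOrder d E F S := by
  have congr_left : ∀ u u' v, d u u' ≤ E → S u v → S u' v := fun u u' v hu huv =>
    ((hwin u' v).2 (hd.window_of_dist_le hEF hu ((hwin u v).1 (Or.inl huv)))).resolve_right
      (hclose u v u' hu huv)
  have congr_right : ∀ u v v', d v v' ≤ E → S u v → S u v' := fun u v v' hv huv =>
    ((hwin v' u).2 (hd.window_of_dist_le hEF hv ((hwin v u).1 (Or.inr huv)))).resolve_left
      fun hvu => hclose v' u v ((hd.symm v' v).trans_le hv) hvu huv
  refine ⟨fun u v w huv hvw => ?_, hwin, fun u u' v v' hu hv => ?_⟩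
  · have hF : d u w ≤ F := (hd.triangle u v w).trans
      (sup_le ((hwin u v).1 (Or.inl huv)).1 ((hwin v w).1 (Or.inl hvw)).1)
    exact ((hwin u w).2 ⟨hF, fun h => hclose u v w h huv hvw⟩).resolve_right
      (hcycle u v w huv hvw)
  · exact ⟨fun h => congr_right _ _ _ hv (congr_left _ _ _ hu h), fun h =>
      congr_right _ _ _ ((hd.symm v' v).trans_le hv)
        (congr_left _ _ _ ((hd.symm u' u).trans_le hu) h)⟩

section Amalgamation

variable [DistribLattice Λ] [OrderTop Λ] {A B₁ B₂ : Type*} [Fintype A]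
  {d₁ : B₁ → B₁ → Λ} {d₂ : B₂ → B₂ → Λ} {f₁ : A → B₁} {f₂ : A → B₂}

variable (d₁ d₂ f₁ f₂) in
def crossDist (x : B₁) (y : B₂) : Λ :=
  Finset.univ.inf fun a => d₁ x (f₁ a) ⊔ d₂ (f₂ a) y

theorem crossDist_le (x : B₁) (y : B₂) (a : A) :
    crossDist d₁ d₂ f₁ f₂ x y ≤ d₁ x (f₁ a) ⊔ d₂ (f₂ a) y :=
  Finset.inf_le (Finset.mem_univ a)

theorem MeetIrreducible.exists_dist_le_of_crossDist_le {E : Λ} (hE : MeetIrreducible E)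
    (hmax : ¬ IsMax E) {x : B₁} {y : B₂} (h : crossDist d₁ d₂ f₁ f₂ x y ≤ E) :
    ∃ a, d₁ x (f₁ a) ≤ E ∧ d₂ (f₂ a) y ≤ E := by
  obtain ⟨a, -, ha⟩ := (hE.infPrime hmax).finset_inf_le.1 h
  exact ⟨a, sup_le_iff.1 ha⟩

variable [OrderBot Λ]

theorem crossDist_map_self (h₁ : IsLambdaPseudoUltrametric d₁)
    (h₂ : IsLambdaPseudoUltrametric d₂) (a : A) : crossDist d₁ d₂ f₁ f₂ (f₁ a) (f₂ a) = ⊥ :=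
  le_bot_iff.1 <| (crossDist_le (f₁ a) (f₂ a) a).trans_eq <| by
    rw [h₁.self_eq_bot, h₂.self_eq_bot, sup_bot_eq]

theorem crossDist_le_dist_sup_crossDist (h₁ : IsLambdaPseudoUltrametric d₁) (x x' : B₁)
    (y : B₂) : crossDist d₁ d₂ f₁ f₂ x y ≤ d₁ x x' ⊔ crossDist d₁ d₂ f₁ f₂ x' y := by
  simp only [crossDist, Finset.inf_sup_distrib_left]
  refine Finset.le_inf fun a _ => (crossDist_le x y a).trans ?_
  rw [← sup_assoc]
  exact sup_le_sup_right (h₁.triangle x x' (f₁ a)) _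

theorem crossDist_le_crossDist_sup_dist (h₂ : IsLambdaPseudoUltrametric d₂) (x : B₁)
    (y y' : B₂) : crossDist d₁ d₂ f₁ f₂ x y ≤ crossDist d₁ d₂ f₁ f₂ x y' ⊔ d₂ y' y := by
  simp only [crossDist, Finset.inf_sup_distrib_right]
  refine Finset.le_inf fun a _ => (crossDist_le x y a).trans ?_
  rw [sup_assoc]
  exact sup_le_sup_left (h₂.triangle (f₂ a) y' y) _

theorem dist_le_crossDist_sup_crossDist₁ (h₁ : IsLambdaPseudoUltrametric d₁)
    (h₂ : IsLambdaPseudoUltrametric d₂) (hf : ∀ a b, d₁ (f₁ a) (f₁ b) = d₂ (f₂ a) (f₂ b))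
    (x x' : B₁) (y : B₂) :
    d₁ x x' ≤ crossDist d₁ d₂ f₁ f₂ x y ⊔ crossDist d₁ d₂ f₁ f₂ x' y := by
  simp only [crossDist, Finset.inf_sup_distrib_right, Finset.inf_sup_distrib_left]
  refine Finset.le_inf fun b _ => Finset.le_inf fun a _ => ?_
  calc d₁ x x' ≤ d₁ x (f₁ a) ⊔ d₁ (f₁ a) (f₁ b) ⊔ d₁ (f₁ b) x' := h₁.triangle4 _ _ _ _
    _ ≤ d₁ x (f₁ a) ⊔ (d₂ (f₂ a) y ⊔ d₂ (f₂ b) y) ⊔ d₁ x' (f₁ b) := by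
      rw [hf, h₁.symm (f₁ b)]; gcongr; exact h₂.triangle_right _ _ _
    _ = (d₁ x (f₁ a) ⊔ d₂ (f₂ a) y) ⊔ (d₁ x' (f₁ b) ⊔ d₂ (f₂ b) y) := by ac_rfl

theorem dist_le_crossDist_sup_crossDist₂ (h₁ : IsLambdaPseudoUltrametric d₁)
    (h₂ : IsLambdaPseudoUltrametric d₂) (hf : ∀ a b, d₁ (f₁ a) (f₁ b) = d₂ (f₂ a) (f₂ b))
    (x : B₁) (y y' : B₂) :
    d₂ y y' ≤ crossDist d₁ d₂ f₁ f₂ x y ⊔ crossDist d₁ d₂ f₁ f₂ x y' := by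
  simp only [crossDist, Finset.inf_sup_distrib_right, Finset.inf_sup_distrib_left]
  refine Finset.le_inf fun b _ => Finset.le_inf fun a _ => ?_
  calc d₂ y y' ≤ d₂ y (f₂ a) ⊔ d₂ (f₂ a) (f₂ b) ⊔ d₂ (f₂ b) y' := h₂.triangle4 _ _ _ _
    _ ≤ d₂ (f₂ a) y ⊔ (d₁ x (f₁ a) ⊔ d₁ x (f₁ b)) ⊔ d₂ (f₂ b) y' := by
      rw [← hf, h₂.symm y]; gcongr; exact h₁.triangle_left _ _ _
    _ = (d₁ x (f₁ a) ⊔ d₂ (f₂ a) y) ⊔ (d₁ x (f₁ b) ⊔ d₂ (f₂ b) y') := by ac_rfl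

variable (d₁ d₂ f₁ f₂) in
def amalgDist : B₁ ⊕ B₂ → B₁ ⊕ B₂ → Λ
  | .inl x, .inl x' => d₁ x x'
  | .inl x, .inr y => crossDist d₁ d₂ f₁ f₂ x y
  | .inr y, .inl x => crossDist d₁ d₂ f₁ f₂ x y
  | .inr y, .inr y' => d₂ y y'

theorem amalgDist_triangle (h₁ : IsLambdaPseudoUltrametric d₁)
    (h₂ : IsLambdaPseudoUltrametric d₂) (hf : ∀ a b, d₁ (f₁ a) (f₁ b) = d₂ (f₂ a) (f₂ b)) :
    ∀ u v w : B₁ ⊕ B₂,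
      amalgDist d₁ d₂ f₁ f₂ u w ≤ amalgDist d₁ d₂ f₁ f₂ u v ⊔ amalgDist d₁ d₂ f₁ f₂ v w
  | .inl x, .inl x', .inl x'' => h₁.triangle x x' x''
  | .inl x, .inl x', .inr y => crossDist_le_dist_sup_crossDist h₁ x x' y
  | .inl x, .inr y, .inl x' => dist_le_crossDist_sup_crossDist₁ h₁ h₂ hf x x' y
  | .inl x, .inr y, .inr y' => crossDist_le_crossDist_sup_dist (f₁ := f₁) h₂ x y' y
  | .inr y, .inl x, .inl x' => by
    show crossDist d₁ d₂ f₁ f₂ x' y ≤ crossDist d₁ d₂ f₁ f₂ x y ⊔ d₁ x x'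
    rw [sup_comm, h₁.symm x x']
    exact crossDist_le_dist_sup_crossDist h₁ x' x y
  | .inr y, .inl x, .inr y' => dist_le_crossDist_sup_crossDist₂ h₁ h₂ hf x y y'
  | .inr y, .inr y', .inl x => by
    show crossDist d₁ d₂ f₁ f₂ x y ≤ d₂ y y' ⊔ crossDist d₁ d₂ f₁ f₂ x y'
    rw [sup_comm, h₂.symm y y']
    exact crossDist_le_crossDist_sup_dist h₂ x y y'
  | .inr y, .inr y', .inr y'' => h₂.triangle y y' y''

theorem isLambdaPseudoUltrametric_amalgDist (h₁ : IsLambdaPseudoUltrametric d₁)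
    (h₂ : IsLambdaPseudoUltrametric d₂) (hf : ∀ a b, d₁ (f₁ a) (f₁ b) = d₂ (f₂ a) (f₂ b)) :
    IsLambdaPseudoUltrametric (amalgDist d₁ d₂ f₁ f₂) where
  self_eq_bot
    | .inl x => h₁.self_eq_bot x
    | .inr y => h₂.self_eq_bot y
  symm
    | .inl x, .inl x' => h₁.symm x x'
    | .inl _, .inr _ | .inr _, .inl _ => rfl
    | .inr y, .inr y' => h₂.symm y y'
  triangle := amalgDist_triangle h₁ h₂ hf

end Amalgamation

section AmalgamatedOrder

variable [DistribLattice Λ] [OrderBot Λ] {A B₁ B₂ : Type*}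
  {d₁ : B₁ → B₁ → Λ} {d₂ : B₂ → B₂ → Λ} {f₁ : A → B₁} {f₂ : A → B₂} {E F : Λ}
  {R₁ : B₁ → B₁ → Prop} {R₂ : B₂ → B₂ → Prop}

variable (d₁ d₂ f₁ f₂ E R₁ R₂) in
def CrossLT (x : B₁) (y : B₂) : Prop :=
  ∃ a, SubquotientLE d₁ E R₁ x (f₁ a) ∧ SubquotientLE d₂ E R₂ (f₂ a) y ∧
    (R₁ x (f₁ a) ∨ R₂ (f₂ a) y)

variable [OrderTop Λ] [Fintype A] in
variable (d₁ d₂ f₁ f₂ E F R₁ R₂) in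
/-- Putting `inr y` below `inl x` exactly when `inl x` is not below `inr y` makes the relation
total on the window. -/
def amalgRel : B₁ ⊕ B₂ → B₁ ⊕ B₂ → Prop
  | .inl x, .inl x' => R₁ x x'
  | .inl x, .inr y => crossDist d₁ d₂ f₁ f₂ x y ≤ F ∧ ¬ crossDist d₁ d₂ f₁ f₂ x y ≤ E ∧
      CrossLT d₁ d₂ f₁ f₂ E R₁ R₂ x y
  | .inr y, .inl x => crossDist d₁ d₂ f₁ f₂ x y ≤ F ∧ ¬ crossDist d₁ d₂ f₁ f₂ x y ≤ E ∧
      ¬ CrossLT d₁ d₂ f₁ f₂ E R₁ R₂ x y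
  | .inr y, .inr y' => R₂ y y'

variable (d₁ d₂ f₁ f₂ E F R₁ R₂) in
structure IsSubquotientSpan : Prop where
  dist₁ : IsLambdaPseudoUltrametric d₁
  dist₂ : IsLambdaPseudoUltrametric d₂
  order₁ : IsSubquotientOrder d₁ E F R₁
  order₂ : IsSubquotientOrder d₂ E F R₂
  dist_map : ∀ a b, d₁ (f₁ a) (f₁ b) = d₂ (f₂ a) (f₂ b)
  rel_map : ∀ a b, R₁ (f₁ a) (f₁ b) ↔ R₂ (f₂ a) (f₂ b)

namespace IsSubquotientSpan

variable (S : IsSubquotientSpan d₁ d₂ f₁ f₂ E F R₁ R₂)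
include S

theorem subquotientLE_map_iff (a b : A) :
    SubquotientLE d₁ E R₁ (f₁ a) (f₁ b) ↔ SubquotientLE d₂ E R₂ (f₂ a) (f₂ b) := by
  rw [SubquotientLE, SubquotientLE, S.rel_map, S.dist_map]

theorem crossLT_of_le_of_crossLT {x x' : B₁} {y : B₂} (hx : SubquotientLE d₁ E R₁ x x')
    (h : CrossLT d₁ d₂ f₁ f₂ E R₁ R₂ x' y) : CrossLT d₁ d₂ f₁ f₂ E R₁ R₂ x y := by
  obtain ⟨a, hxa, hay, hlt | hlt⟩ := h
  · have hxa' := S.order₁.lt_of_le_of_lt S.dist₁ hx hlt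
    exact ⟨a, Or.inl hxa', hay, Or.inl hxa'⟩
  · exact ⟨a, S.order₁.le_trans S.dist₁ hx hxa, hay, Or.inr hlt⟩

theorem crossLT_of_crossLT_of_le {x : B₁} {y y' : B₂} (h : CrossLT d₁ d₂ f₁ f₂ E R₁ R₂ x y)
    (hy : SubquotientLE d₂ E R₂ y y') : CrossLT d₁ d₂ f₁ f₂ E R₁ R₂ x y' := by
  obtain ⟨a, hxa, hay, hlt | hlt⟩ := h
  · exact ⟨a, hxa, S.order₂.le_trans S.dist₂ hay hy, Or.inl hlt⟩
  · have hay' := S.order₂.lt_of_lt_of_le S.dist₂ hlt hy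
    exact ⟨a, hxa, Or.inl hay', Or.inr hay'⟩

theorem crossLT_map_right_iff {x : B₁} {a : A} :
    CrossLT d₁ d₂ f₁ f₂ E R₁ R₂ x (f₂ a) ↔ R₁ x (f₁ a) := by
  refine ⟨fun ⟨b, hxb, hba, hlt⟩ => ?_,
    fun h => ⟨a, Or.inl h, SubquotientLE.refl S.dist₂ _, Or.inl h⟩⟩
  rw [← S.subquotientLE_map_iff] at hba
  rcases hlt with hlt | hlt
  · exact S.order₁.lt_of_lt_of_le S.dist₁ hlt hba
  · exact S.order₁.lt_of_le_of_lt S.dist₁ hxb ((S.rel_map b a).2 hlt)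

theorem crossLT_map_left_iff {y : B₂} {a : A} :
    CrossLT d₁ d₂ f₁ f₂ E R₁ R₂ (f₁ a) y ↔ R₂ (f₂ a) y := by
  refine ⟨fun ⟨b, hab, hby, hlt⟩ => ?_,
    fun h => ⟨a, SubquotientLE.refl S.dist₁ _, Or.inl h, Or.inr h⟩⟩
  rw [S.subquotientLE_map_iff] at hab
  rcases hlt with hlt | hlt
  · exact S.order₂.lt_of_lt_of_le S.dist₂ ((S.rel_map a b).1 hlt) hby
  · exact S.order₂.lt_of_le_of_lt S.dist₂ hab hlt

variable [OrderTop Λ] [Fintype A]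

theorem amalgRel_or_amalgRel_iff : ∀ u v : B₁ ⊕ B₂,
    (amalgRel d₁ d₂ f₁ f₂ E F R₁ R₂ u v ∨ amalgRel d₁ d₂ f₁ f₂ E F R₁ R₂ v u) ↔
      (amalgDist d₁ d₂ f₁ f₂ u v ≤ F ∧ ¬ amalgDist d₁ d₂ f₁ f₂ u v ≤ E)
  | .inl x, .inl x' => S.order₁.2.1 x x'
  | .inl _, .inr _ | .inr _, .inl _ => by dsimp only [amalgRel, amalgDist]; tauto
  | .inr y, .inr y' => S.order₂.2.1 y y'

theorem not_amalgRel_of_amalgDist_le (hE : MeetIrreducible E) : ∀ u v u' : B₁ ⊕ B₂,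
    amalgDist d₁ d₂ f₁ f₂ u u' ≤ E → amalgRel d₁ d₂ f₁ f₂ E F R₁ R₂ u v →
      ¬ amalgRel d₁ d₂ f₁ f₂ E F R₁ R₂ v u'
  -- when `u` and `u'` lie on different sides, their `E`-closeness passes through some `a : A`
  | .inl _, .inl _, .inl _, hu, huv, h => S.order₁.not_lt_of_lt_of_dist_le S.dist₁ hu huv h
  | .inl _, .inl _, .inr _, hu, huv, ⟨_, _, h⟩ => by
    obtain ⟨a, hxa, hay⟩ := hE.exists_dist_le_of_crossDist_le (S.order₁.not_isMax huv) hu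
    have hlt := S.crossLT_map_right_iff.1
      (S.crossLT_of_crossLT_of_le h (.of_dist_le_symm S.dist₂ hay))
    exact S.order₁.not_lt_of_lt_of_dist_le S.dist₁ hxa huv hlt
  | .inl _, .inr _, .inl _, hu, ⟨_, _, huv⟩, ⟨_, _, h⟩ =>
    h (S.crossLT_of_le_of_crossLT (.of_dist_le_symm S.dist₁ hu) huv)
  | .inl _, .inr _, .inr _, hu, ⟨_, _, huv⟩, h => by
    obtain ⟨a, hxa, hay⟩ := hE.exists_dist_le_of_crossDist_le (S.order₂.not_isMax h) hu
    have hlt := S.crossLT_map_left_iff.1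
      (S.crossLT_of_le_of_crossLT (.of_dist_le_symm S.dist₁ hxa) huv)
    exact S.order₂.not_lt_of_lt_of_dist_le S.dist₂ hay hlt h
  | .inr _, .inl _, .inl _, hu, ⟨_, _, huv⟩, h => by
    obtain ⟨a, hxa, hay⟩ := hE.exists_dist_le_of_crossDist_le (S.order₁.not_isMax h) hu
    exact huv (S.crossLT_of_crossLT_of_le (S.crossLT_map_right_iff.2
      (S.order₁.lt_of_lt_of_le S.dist₁ h (Or.inr hxa))) (Or.inr hay))
  | .inr _, .inl _, .inr _, hu, ⟨_, _, huv⟩, ⟨_, _, h⟩ =>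
    huv (S.crossLT_of_crossLT_of_le h (.of_dist_le_symm S.dist₂ hu))
  | .inr _, .inr _, .inl _, hu, huv, ⟨_, _, h⟩ => by
    obtain ⟨a, hxa, hay⟩ := hE.exists_dist_le_of_crossDist_le (S.order₂.not_isMax huv) hu
    exact h (S.crossLT_of_le_of_crossLT (Or.inr hxa) (S.crossLT_map_left_iff.2
      (S.order₂.lt_of_le_of_lt S.dist₂ (Or.inr hay) huv)))
  | .inr _, .inr _, .inr _, hu, huv, h => S.order₂.not_lt_of_lt_of_dist_le S.dist₂ hu huv h

theorem not_amalgRel_cycle (u v w : B₁ ⊕ B₂) (huv : amalgRel d₁ d₂ f₁ f₂ E F R₁ R₂ u v)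
    (hvw : amalgRel d₁ d₂ f₁ f₂ E F R₁ R₂ v w) : ¬ amalgRel d₁ d₂ f₁ f₂ E F R₁ R₂ w u := by
  have cycle₁ : ∀ x x' y, amalgRel d₁ d₂ f₁ f₂ E F R₁ R₂ (.inl x) (.inl x') →
      amalgRel d₁ d₂ f₁ f₂ E F R₁ R₂ (.inl x') (.inr y) →
      ¬ amalgRel d₁ d₂ f₁ f₂ E F R₁ R₂ (.inr y) (.inl x) :=
    fun _ _ _ h₁ ⟨_, _, h₂⟩ ⟨_, _, h₃⟩ => h₃ (S.crossLT_of_le_of_crossLT (Or.inl h₁) h₂)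
  have cycle₂ : ∀ y y' x, amalgRel d₁ d₂ f₁ f₂ E F R₁ R₂ (.inr y) (.inr y') →
      amalgRel d₁ d₂ f₁ f₂ E F R₁ R₂ (.inr y') (.inl x) →
      ¬ amalgRel d₁ d₂ f₁ f₂ E F R₁ R₂ (.inl x) (.inr y) :=
    fun _ _ _ h₁ ⟨_, _, h₂⟩ ⟨_, _, h₃⟩ => h₂ (S.crossLT_of_crossLT_of_le h₃ (Or.inl h₁))
  intro hwu
  -- every mixed cycle is a rotation of one of the two above
  rcases u with _ | _ <;> rcases v with _ | _ <;> rcases w with _ | _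
  · exact S.order₁.irrefl S.dist₁ (S.order₁.1 _ _ _ (S.order₁.1 _ _ _ huv hvw) hwu)
  · exact cycle₁ _ _ _ huv hvw hwu
  · exact cycle₁ _ _ _ hwu huv hvw
  · exact cycle₂ _ _ _ hvw hwu huv
  · exact cycle₁ _ _ _ hvw hwu huv
  · exact cycle₂ _ _ _ hwu huv hvw
  · exact cycle₂ _ _ _ huv hvw hwu
  · exact S.order₂.irrefl S.dist₂ (S.order₂.1 _ _ _ (S.order₂.1 _ _ _ huv hvw) hwu)

theorem isSubquotientOrder_amalgRel (hEF : E ≤ F) (hE : MeetIrreducible E) :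
    IsSubquotientOrder (amalgDist d₁ d₂ f₁ f₂) E F (amalgRel d₁ d₂ f₁ f₂ E F R₁ R₂) :=
  isSubquotientOrder_of_not_cycle
    (isLambdaPseudoUltrametric_amalgDist S.dist₁ S.dist₂ S.dist_map) hEF
    S.amalgRel_or_amalgRel_iff (S.not_amalgRel_of_amalgDist_le hE) S.not_amalgRel_cycle

end IsSubquotientSpan

end AmalgamatedOrder

theorem stmt_2_general {Λ : Type} [DistribLattice Λ] [OrderBot Λ] [Fintype Λ]
    (n : ℕ) (E F : Fin n → Λ) (hEF : ∀ i, E i ≤ F i)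
    (hirr : ∀ i, MeetIrreducible (E i))
    (A B₁ B₂ : Type) [Fintype A] [Fintype B₁] [Fintype B₂]
    (dA : A → A → Λ) (d₁ : B₁ → B₁ → Λ) (d₂ : B₂ → B₂ → Λ)
    (RA : Fin n → A → A → Prop) (R₁ : Fin n → B₁ → B₁ → Prop)
    (R₂ : Fin n → B₂ → B₂ → Prop)
    (h₁ : IsLambdaUltrametric d₁)
    (h₂ : IsLambdaUltrametric d₂)
    (hR₁ : ∀ i, IsSubquotientOrder d₁ (E i) (F i) (R₁ i))
    (hR₂ : ∀ i, IsSubquotientOrder d₂ (E i) (F i) (R₂ i))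
    (f₁ : A → B₁) (f₂ : A → B₂)
    (hf₁d : ∀ x y, d₁ (f₁ x) (f₁ y) = dA x y)
    (hf₂d : ∀ x y, d₂ (f₂ x) (f₂ y) = dA x y)
    (hf₁R : ∀ i x y, RA i x y ↔ R₁ i (f₁ x) (f₁ y))
    (hf₂R : ∀ i x y, RA i x y ↔ R₂ i (f₂ x) (f₂ y)) :
    ∃ (C : Type) (_ : Fintype C) (dC : C → C → Λ)
      (RC : Fin n → C → C → Prop) (g₁ : B₁ → C) (g₂ : B₂ → C),
      IsLambdaUltrametric dC ∧
      (∀ i, IsSubquotientOrder dC (E i) (F i) (RC i)) ∧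
      (∀ x y, dC (g₁ x) (g₁ y) = d₁ x y) ∧
      (∀ x y, dC (g₂ x) (g₂ y) = d₂ x y) ∧
      (∀ i x y, R₁ i x y ↔ RC i (g₁ x) (g₁ y)) ∧
      (∀ i x y, R₂ i x y ↔ RC i (g₂ x) (g₂ y)) ∧
      (∀ a, g₁ (f₁ a) = g₂ (f₂ a)) := by
  classical
  have : Nonempty Λ := ⟨⊥⟩
  let : OrderTop Λ := Fintype.toOrderTop Λ
  have hp₁ := h₁.isLambdaPseudoUltrametric
  have hp₂ := h₂.isLambdaPseudoUltrametric
  have hf : ∀ a b, d₁ (f₁ a) (f₁ b) = d₂ (f₂ a) (f₂ b) := fun a b =>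
    (hf₁d a b).trans (hf₂d a b).symm
  have hS : ∀ i, IsSubquotientSpan d₁ d₂ f₁ f₂ (E i) (F i) (R₁ i) (R₂ i) := fun i =>
    ⟨hp₁, hp₂, hR₁ i, hR₂ i, hf, fun a b => (hf₁R i a b).symm.trans (hf₂R i a b)⟩
  have hd := isLambdaPseudoUltrametric_amalgDist hp₁ hp₂ hf
  refine ⟨Quotient hd.setoid, inferInstance, hd.quotDist,
    fun i => hd.quotRel ((hS i).isSubquotientOrder_amalgRel (hEF i) (hirr i)),
    fun x => ⟦.inl x⟧, fun y => ⟦.inr y⟧, hd.isLambdaUltrametric_quotDist,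
    fun i => hd.isSubquotientOrder_quotRel _, fun _ _ => rfl, fun _ _ => rfl,
    fun _ _ _ => Iff.rfl, fun _ _ _ => Iff.rfl, fun a => Quotient.sound ?_⟩
  exact crossDist_map_self hp₁ hp₂ a

/-- the class of finite Λ-ultrametric spaces equipped with
subquotient orders from meet-irreducible `Eᵢ` to `Fᵢ` has amalgamation. -/
theorem stmt_2 {Λ : Type} [DistribLattice Λ] [OrderBot Λ] [Fintype Λ]
    (n : ℕ) (E F : Fin n → Λ) (hEF : ∀ i, E i ≤ F i)
    (hirr : ∀ i, MeetIrreducible (E i))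
    (A B₁ B₂ : Type) [Fintype A] [Fintype B₁] [Fintype B₂]
    (dA : A → A → Λ) (d₁ : B₁ → B₁ → Λ) (d₂ : B₂ → B₂ → Λ)
    (RA : Fin n → A → A → Prop) (R₁ : Fin n → B₁ → B₁ → Prop)
    (R₂ : Fin n → B₂ → B₂ → Prop)
    (hA : IsLambdaUltrametric dA) (h₁ : IsLambdaUltrametric d₁)
    (h₂ : IsLambdaUltrametric d₂)
    (hRA : ∀ i, IsSubquotientOrder dA (E i) (F i) (RA i))
    (hR₁ : ∀ i, IsSubquotientOrder d₁ (E i) (F i) (R₁ i))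
    (hR₂ : ∀ i, IsSubquotientOrder d₂ (E i) (F i) (R₂ i))
    (f₁ : A → B₁) (f₂ : A → B₂)
    (hf₁d : ∀ x y, d₁ (f₁ x) (f₁ y) = dA x y)
    (hf₂d : ∀ x y, d₂ (f₂ x) (f₂ y) = dA x y)
    (hf₁R : ∀ i x y, RA i x y ↔ R₁ i (f₁ x) (f₁ y))
    (hf₂R : ∀ i x y, RA i x y ↔ R₂ i (f₂ x) (f₂ y)) :
    ∃ (C : Type) (_ : Fintype C) (dC : C → C → Λ)
      (RC : Fin n → C → C → Prop) (g₁ : B₁ → C) (g₂ : B₂ → C),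
      IsLambdaUltrametric dC ∧
      (∀ i, IsSubquotientOrder dC (E i) (F i) (RC i)) ∧
      (∀ x y, dC (g₁ x) (g₁ y) = d₁ x y) ∧
      (∀ x y, dC (g₂ x) (g₂ y) = d₂ x y) ∧
      (∀ i x y, R₁ i x y ↔ RC i (g₁ x) (g₁ y)) ∧
      (∀ i x y, R₂ i x y ↔ RC i (g₂ x) (g₂ y)) ∧
      (∀ a, g₁ (f₁ a) = g₂ (f₂ a)) :=
  stmt_2_general n E F hEF hirr A B₁ B₂ dA d₁ d₂ RA R₁ R₂ h₁ h₂ hR₁ hR₂ f₁ f₂ hf₁d hf₂d hf₁R hf₂R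
end

section
/- Let K be a class of finite 3-dimensional permutation structures closed under isomorphism and under substructure and having the amalgamation property. Let p, q, r, s ∈ Bool³ be pairwise distinct vectors such that each pair of them differs in exactly two coordinates. Suppose p and q are each realized in K, and suppose the following three configurations are forbidden (none occurs in any member of K): 'p ⇒ q' (points z, u, v with pattern(z,u) = p, pattern(z,v) = p, pattern(u,v) = q); the directed cycle C₃(p,q,r) (points u, v, w with pattern(u,v) = p, pattern(v,w) = q, pattern(w,u) = r); and the directed cycle C₃(p,q,s) (points u, v, w with pattern(u,v) = p, pattern(v,w) = q, pattern(w,u) = s). Then some member of K contains points x, b, y with pattern(x,b) = p, pattern(b,y) = q, and pattern(x,y) = q. -/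
/-!
Amalgamate a `p`-edge `x b` with a `q`-edge `b y` over the point `b`. On the coordinate where
`p` and `q` agree, transitivity forces the pattern `t` of `(x, y)` to agree with both, and
`x ≠ y` since `q` is not the complement of `p`. Among the four vectors with that value at that
coordinate are `p`, `q` and the complements of `r` and `s`, so `t = p` gives `p ⇒ q`,
`t = !r` or `t = !s` gives a forbidden 3-cycle, and only `t = q` is left.
-/

/-- A finite `n`-dimensional permutation structure. -/
structure FinPermStruct (n : ℕ) where
  carrier : Type
  fin : Fintype carrier
  lt : Fin n → carrier → carrier → Prop
  strict : ∀ i, IsStrictTotalOrder carrier (lt i)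

/-- An embedding of finite `n`-dimensional permutation structures. -/
def IsEmb {n : ℕ} (A B : FinPermStruct n) (f : A.carrier → B.carrier) : Prop :=
  Function.Injective f ∧ ∀ x y i, A.lt i x y ↔ B.lt i (f x) (f y)

/-- The pattern (2-type) of an ordered pair of distinct points. -/
def Pattern {n : ℕ} {M : Type*} (lt : Fin n → M → M → Prop) (x y : M)
    (v : Fin n → Bool) : Prop :=
  x ≠ y ∧ ∀ i, lt i x y ↔ v i = true

/-- A 2-type `v` is realized in the class `K`. -/
def Realized {n : ℕ} (K : FinPermStruct n → Prop) (v : Fin n → Bool) : Prop :=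
  ∃ B, K B ∧ ∃ x y : B.carrier, Pattern B.lt x y v

namespace FinPermStruct

def point (n : ℕ) : FinPermStruct n where
  carrier := Unit
  fin := inferInstance
  lt := fun _ _ _ => False
  strict := fun _ =>
    { trichotomous := fun _ _ _ _ => rfl
      irrefl := fun _ h => h
      trans := fun _ _ _ h => h.elim }

variable {n : ℕ}

theorem isEmb_point (B : FinPermStruct n) (b : B.carrier) :
    IsEmb (point n) B (fun _ => b) :=
  ⟨fun _ _ _ => rfl, fun _ _ i => iff_of_false id ((B.strict i).irrefl b)⟩

theorem lt_comm_iff_not_lt (C : FinPermStruct n) {x y : C.carrier} (hxy : x ≠ y) (i : Fin n) :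
    C.lt i y x ↔ ¬ C.lt i x y := by
  have := C.strict i
  exact ⟨asymm, fun h => (trichotomous_of (C.lt i) x y).resolve_left h |>.resolve_left hxy⟩

end FinPermStruct

open FinPermStruct

section Pattern

variable {n : ℕ}

theorem IsEmb.pattern {A B : FinPermStruct n} {f : A.carrier → B.carrier} (hf : IsEmb A B f)
    {x y : A.carrier} {v : Fin n → Bool} (h : Pattern A.lt x y v) :
    Pattern B.lt (f x) (f y) v :=
  ⟨hf.1.ne h.1, fun i => (hf.2 x y i).symm.trans (h.2 i)⟩

theorem Pattern.eq {M : Type*} {lt : Fin n → M → M → Prop} {x y : M} {v w : Fin n → Bool}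
    (hv : Pattern lt x y v) (hw : Pattern lt x y w) : v = w :=
  funext fun i => Bool.eq_iff_iff.2 ((hv.2 i).symm.trans (hw.2 i))

theorem pattern_decide {M : Type*} (lt : Fin n → M → M → Prop) [∀ i, DecidableRel (lt i)]
    {x y : M} (hxy : x ≠ y) :
    Pattern lt x y (fun i => decide (lt i x y)) :=
  ⟨hxy, fun _ => decide_eq_true_iff.symm⟩

theorem Pattern.swap {C : FinPermStruct n} {x y : C.carrier} {v : Fin n → Bool}
    (h : Pattern C.lt x y v) : Pattern C.lt y x (fun i => !v i) :=
  ⟨h.1.symm, fun i => by simp [C.lt_comm_iff_not_lt h.1, h.2 i]⟩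

theorem Pattern.lt_iff_of_eq {C : FinPermStruct n} {x b y : C.carrier} {p q : Fin n → Bool}
    (hxb : Pattern C.lt x b p) (hby : Pattern C.lt b y q) {i : Fin n} (hi : p i = q i) :
    C.lt i x y ↔ p i = true := by
  have := C.strict i
  cases hp : p i
  · have hbx : C.lt i b x := (C.lt_comm_iff_not_lt hxb.1 i).2 (by simp [hxb.2 i, hp])
    have hyb : C.lt i y b := (C.lt_comm_iff_not_lt hby.1 i).2 (by simp [hby.2 i, ← hi, hp])
    simpa using asymm (_root_.trans hyb hbx)
  · simpa using _root_.trans ((hxb.2 i).2 hp) ((hby.2 i).2 (hi ▸ hp))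

end Pattern

/-- Amalgamating over a single point joins a `p`-edge and a `q`-edge into a path. -/
theorem Realized.exists_path {n : ℕ} {K : FinPermStruct n → Prop}
    (hsub : ∀ A B, K B → (∃ f, IsEmb A B f) → K A)
    (hap : ∀ (A B₁ B₂ : FinPermStruct n) (f₁ : A.carrier → B₁.carrier)
      (f₂ : A.carrier → B₂.carrier),
      K A → K B₁ → K B₂ → IsEmb A B₁ f₁ → IsEmb A B₂ f₂ →
      ∃ (C : FinPermStruct n) (g₁ : B₁.carrier → C.carrier)
        (g₂ : B₂.carrier → C.carrier),
        K C ∧ IsEmb B₁ C g₁ ∧ IsEmb B₂ C g₂ ∧ ∀ a, g₁ (f₁ a) = g₂ (f₂ a))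
    {p q : Fin n → Bool} (hp : Realized K p) (hq : Realized K q) :
    ∃ C, K C ∧ ∃ x b y : C.carrier, Pattern C.lt x b p ∧ Pattern C.lt b y q := by
  obtain ⟨B₁, hB₁, x, b₁, hxb⟩ := hp
  obtain ⟨B₂, hB₂, b₂, y, hby⟩ := hq
  obtain ⟨C, g₁, g₂, hC, hg₁, hg₂, hglue⟩ :=
    hap _ B₁ B₂ _ _ (hsub _ B₁ hB₁ ⟨_, isEmb_point B₁ b₁⟩) hB₁ hB₂
      (isEmb_point B₁ b₁) (isEmb_point B₂ b₂)
  exact ⟨C, hC, g₁ x, g₁ b₁, g₂ y, hg₁.pattern hxb, hglue () ▸ hg₂.pattern hby⟩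

theorem ne_not_of_hammingDist_eq_two :
    ∀ p q : Fin 3 → Bool, hammingDist p q = 2 → q ≠ (! p ·) := by
  decide

theorem eq_or_eq_or_not_eq_or_not_eq_of_hammingDist_eq_two :
    ∀ p q r s t : Fin 3 → Bool,
      hammingDist p q = 2 → hammingDist p r = 2 → hammingDist p s = 2 →
      hammingDist q r = 2 → hammingDist q s = 2 → hammingDist r s = 2 →
      (∀ i, p i = q i → t i = p i) →
      t = q ∨ t = p ∨ (! t ·) = r ∨ (! t ·) = s := by
  decide +kernel

theorem stmt_16_general (K : FinPermStruct 3 → Prop)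
    (hsub : ∀ A B, K B → (∃ f, IsEmb A B f) → K A)
    (hap : ∀ (A B₁ B₂ : FinPermStruct 3) (f₁ : A.carrier → B₁.carrier)
      (f₂ : A.carrier → B₂.carrier),
      K A → K B₁ → K B₂ → IsEmb A B₁ f₁ → IsEmb A B₂ f₂ →
      ∃ (C : FinPermStruct 3) (g₁ : B₁.carrier → C.carrier)
        (g₂ : B₂.carrier → C.carrier),
        K C ∧ IsEmb B₁ C g₁ ∧ IsEmb B₂ C g₂ ∧ ∀ a, g₁ (f₁ a) = g₂ (f₂ a))
    (p q r s : Fin 3 → Bool)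
    (hpq : (Finset.univ.filter fun i => p i ≠ q i).card = 2)
    (hpr : (Finset.univ.filter fun i => p i ≠ r i).card = 2)
    (hps : (Finset.univ.filter fun i => p i ≠ s i).card = 2)
    (hqr : (Finset.univ.filter fun i => q i ≠ r i).card = 2)
    (hqs : (Finset.univ.filter fun i => q i ≠ s i).card = 2)
    (hrs : (Finset.univ.filter fun i => r i ≠ s i).card = 2)
    (hp : Realized K p) (hq : Realized K q)
    -- `p ⇒ q` is forbidden
    (hforb₁ : ¬ ∃ B, K B ∧ ∃ z u v : B.carrier,
      Pattern B.lt z u p ∧ Pattern B.lt z v p ∧ Pattern B.lt u v q)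
    -- `C₃(p,q,r)` is forbidden
    (hforb₂ : ¬ ∃ B, K B ∧ ∃ u v w : B.carrier,
      Pattern B.lt u v p ∧ Pattern B.lt v w q ∧ Pattern B.lt w u r)
    -- `C₃(p,q,s)` is forbidden
    (hforb₃ : ¬ ∃ B, K B ∧ ∃ u v w : B.carrier,
      Pattern B.lt u v p ∧ Pattern B.lt v w q ∧ Pattern B.lt w u s) :
    ∃ B, K B ∧ ∃ x b y : B.carrier,
      Pattern B.lt x b p ∧ Pattern B.lt b y q ∧ Pattern B.lt x y q := by
  classical
  obtain ⟨C, hC, x, b, y, hxb, hby⟩ := Realized.exists_path hsub hap hp hq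
  have hxy : x ≠ y := by
    rintro rfl
    exact ne_not_of_hammingDist_eq_two p q hpq (hby.eq hxb.swap)
  set t := fun i => decide (C.lt i x y)
  have hxy_t : Pattern C.lt x y t := pattern_decide C.lt hxy
  have ht : ∀ i, p i = q i → t i = p i := fun i hi =>
    Bool.eq_iff_iff.2 ((hxy_t.2 i).symm.trans (hxb.lt_iff_of_eq hby hi))
  rcases eq_or_eq_or_not_eq_or_not_eq_of_hammingDist_eq_two p q r s t
    hpq hpr hps hqr hqs hrs ht with rfl | rfl | rfl | rfl
  · exact ⟨C, hC, x, b, y, hxb, hby, hxy_t⟩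
  · exact (hforb₁ ⟨C, hC, x, b, y, hxb, hxy_t, hby⟩).elim
  · exact (hforb₂ ⟨C, hC, x, b, y, hxb, hby, hxy_t.swap⟩).elim
  · exact (hforb₃ ⟨C, hC, x, b, y, hxb, hby, hxy_t.swap⟩).elim

/-- in a hereditary, isomorphism-closed amalgamation class of
finite 3-dimensional permutation structures, with `p,q,r,s` pairwise at
Hamming distance 2, `p` and `q` realized, and `p ⇒ q`, `C₃(p,q,r)` and
`C₃(p,q,s)` all forbidden, the configuration `q ⇐ p` is realized. -/
theorem stmt_16 (K : FinPermStruct 3 → Prop)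
    (hiso : ∀ A B, K A →
      (∃ f : B.carrier → A.carrier, Function.Bijective f ∧ IsEmb B A f) → K B)
    (hsub : ∀ A B, K B → (∃ f, IsEmb A B f) → K A)
    (hap : ∀ (A B₁ B₂ : FinPermStruct 3) (f₁ : A.carrier → B₁.carrier)
      (f₂ : A.carrier → B₂.carrier),
      K A → K B₁ → K B₂ → IsEmb A B₁ f₁ → IsEmb A B₂ f₂ →
      ∃ (C : FinPermStruct 3) (g₁ : B₁.carrier → C.carrier)
        (g₂ : B₂.carrier → C.carrier),
        K C ∧ IsEmb B₁ C g₁ ∧ IsEmb B₂ C g₂ ∧ ∀ a, g₁ (f₁ a) = g₂ (f₂ a))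
    (p q r s : Fin 3 → Bool)
    (hpq : (Finset.univ.filter fun i => p i ≠ q i).card = 2)
    (hpr : (Finset.univ.filter fun i => p i ≠ r i).card = 2)
    (hps : (Finset.univ.filter fun i => p i ≠ s i).card = 2)
    (hqr : (Finset.univ.filter fun i => q i ≠ r i).card = 2)
    (hqs : (Finset.univ.filter fun i => q i ≠ s i).card = 2)
    (hrs : (Finset.univ.filter fun i => r i ≠ s i).card = 2)
    (hp : Realized K p) (hq : Realized K q)
    -- `p ⇒ q` is forbidden
    (hforb₁ : ¬ ∃ B, K B ∧ ∃ z u v : B.carrier,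
      Pattern B.lt z u p ∧ Pattern B.lt z v p ∧ Pattern B.lt u v q)
    -- `C₃(p,q,r)` is forbidden
    (hforb₂ : ¬ ∃ B, K B ∧ ∃ u v w : B.carrier,
      Pattern B.lt u v p ∧ Pattern B.lt v w q ∧ Pattern B.lt w u r)
    -- `C₃(p,q,s)` is forbidden
    (hforb₃ : ¬ ∃ B, K B ∧ ∃ u v w : B.carrier,
      Pattern B.lt u v p ∧ Pattern B.lt v w q ∧ Pattern B.lt w u s) :
    ∃ B, K B ∧ ∃ x b y : B.carrier,
      Pattern B.lt x b p ∧ Pattern B.lt b y q ∧ Pattern B.lt x y q :=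
  stmt_16_general K hsub hap p q r s hpq hpr hps hqr hqs hrs hp hq hforb₁ hforb₂ hforb₃
end

section
/- Let M be a set equipped with 3 strict linear orders <₁, <₂, <₃ that is ultrahomogeneous. Let E and F be equivalence relations on M, each invariant under every automorphism of M (every bijection of M onto itself preserving each <ᵢ in both directions). Then E and F are comparable: E ⊆ F or F ⊆ E. -/
/-!
A pair of distinct points has a type: the three truth values of `lt i x y`, and by
ultrahomogeneity two pairs of the same type are conjugate under an automorphism, so an
invariant relation holding on one holds on the other. Suppose `E x y`, `¬ F x y`, `F u v`,
`¬ E u v`. Swapping `u` and `v` flips every bit of the type, so we may assume the types of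
`(x, y)` and `(u, v)` differ in at most one order `j`. Move `u` to `y` by an automorphism and
let `z` be the image of `v`. Off `j`, the pairs `(x, y)` and `(y, z)` have the same type, so
`x`, `y`, `z` are monotone in those orders and `(x, z)` has the type of `(x, y)`; at `j` it
agrees with one of `(x, y)`, `(u, v)`. In the first case `E x z`, hence `E y z` and `E u v`;
in the second `F x z`, and `F y z` gives `F x y`.
-/

/-- Ultrahomogeneity for a set with a family of strict linear orders. -/
def Ultrahomog {n : ℕ} {M : Type*} (lt : Fin n → M → M → Prop) : Prop :=
  ∀ s : Set M, s.Finite → ∀ f : M → M,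
    (∀ x ∈ s, ∀ y ∈ s, ∀ i, lt i x y ↔ lt i (f x) (f y)) →
    ∃ g : M ≃ M, (∀ x y i, lt i x y ↔ lt i (g x) (g y)) ∧ ∀ x ∈ s, g x = f x

theorem Fin.exists_forall_ne_or_forall_ne_not (p : Fin 3 → Prop) :
    ∃ j, (∀ i ≠ j, p i) ∨ (∀ i ≠ j, ¬ p i) := by
  classical
  have key : ∀ b : Fin 3 → Bool, ∃ j, (∀ i ≠ j, b i = true) ∨ (∀ i ≠ j, b i = false) := by
    decide
  simpa using key fun i => decide (p i)

section StrictTotalOrder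

variable {α : Type*} {r : α → α → Prop} [IsStrictTotalOrder α r] {a b c : α}

theorem rel_swap_iff_not_rel (hab : a ≠ b) : r b a ↔ ¬ r a b :=
  ⟨fun hba hab' => asymm hab' hba,
    fun h => ((trichotomous_of r a b).resolve_left h).resolve_left hab⟩

theorem rel_iff_of_rel_iff_rel (hab : a ≠ b) (hbc : b ≠ c) (h : r a b ↔ r b c) :
    r a c ↔ r a b := by
  by_cases hr : r a b
  · exact iff_of_true (_root_.trans hr (h.mp hr)) hr
  · have hba : r b a := (rel_swap_iff_not_rel hab).mpr hr
    have hcb : r c b := (rel_swap_iff_not_rel hbc).mpr (mt h.mpr hr)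
    exact iff_of_false (fun hac => asymm hac (_root_.trans hcb hba)) hr

end StrictTotalOrder

section PermutationStructure

variable {n : ℕ} {M : Type*} {lt : Fin n → M → M → Prop}

def IsOrderAut (lt : Fin n → M → M → Prop) (g : M ≃ M) : Prop :=
  ∀ x y i, lt i x y ↔ lt i (g x) (g y)

def IsAutInvariant (lt : Fin n → M → M → Prop) (R : M → M → Prop) : Prop :=
  ∀ g : M ≃ M, IsOrderAut lt g → ∀ x y, R x y ↔ R (g x) (g y)

theorem Ultrahomog.exists_isOrderAut_apply_eq (hlt : ∀ i, IsStrictTotalOrder M (lt i))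
    (hhom : Ultrahomog lt) (a c : M) : ∃ g, IsOrderAut lt g ∧ g a = c := by
  obtain ⟨g, hg, hga⟩ := hhom {a} (Set.finite_singleton a) (fun _ => c) <| by
    rintro _ rfl _ rfl i
    exact iff_of_false (irrefl _) (irrefl c)
  exact ⟨g, hg, hga a rfl⟩

theorem Ultrahomog.exists_isOrderAut_apply_eq_apply_eq (hlt : ∀ i, IsStrictTotalOrder M (lt i))
    (hhom : Ultrahomog lt) {a b c d : M} (hab : a ≠ b) (hcd : c ≠ d)
    (h : ∀ i, lt i a b ↔ lt i c d) : ∃ g, IsOrderAut lt g ∧ g a = c ∧ g b = d := by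
  classical
  have hswap : ∀ i, lt i b a ↔ lt i d c := fun i => by
    rw [rel_swap_iff_not_rel (r := lt i) hab, rel_swap_iff_not_rel (r := lt i) hcd, h i]
  let f : M → M := fun w => if w = a then c else d
  have hfa : f a = c := if_pos rfl
  have hfb : f b = d := if_neg hab.symm
  obtain ⟨g, hg, hgf⟩ := hhom {a, b} (Set.toFinite _) f <| by
    rintro x hx y hy i
    rcases hx with rfl | rfl <;> rcases hy with rfl | rfl
    · exact iff_of_false (irrefl _) (irrefl _)
    · rw [hfa, hfb]; exact h i
    · rw [hfa, hfb]; exact hswap i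
    · exact iff_of_false (irrefl _) (irrefl _)
  exact ⟨g, hg, (hgf a (by simp)).trans hfa, (hgf b (by simp)).trans hfb⟩

theorem IsAutInvariant.of_forall_lt_iff {R : M → M → Prop} (hlt : ∀ i, IsStrictTotalOrder M (lt i))
    (hhom : Ultrahomog lt) (hR : IsAutInvariant lt R) (hRrefl : ∀ x, R x x) {a b c d : M}
    (hab : a ≠ b) (h : ∀ i, lt i a b ↔ lt i c d) (hRab : R a b) : R c d := by
  rcases eq_or_ne c d with rfl | hcd
  · exact hRrefl c
  obtain ⟨g, hg, rfl, rfl⟩ := hhom.exists_isOrderAut_apply_eq_apply_eq hlt hab hcd h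
  exact (hR g hg a b).mp hRab

theorem Ultrahomog.rel_or_rel_of_types_agree_off (hlt : ∀ i, IsStrictTotalOrder M (lt i))
    (hhom : Ultrahomog lt) {E F : M → M → Prop} (hEe : Equivalence E) (hFe : Equivalence F)
    (hEinv : IsAutInvariant lt E) (hFinv : IsAutInvariant lt F) {x y u v : M} (hExy : E x y)
    (hFuv : F u v) (j : Fin n) (hagree : ∀ i ≠ j, lt i x y ↔ lt i u v) : E u v ∨ F x y := by
  rcases eq_or_ne x y with rfl | hxy
  · exact Or.inr (hFe.refl x)
  rcases eq_or_ne u v with rfl | huv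
  · exact Or.inl (hEe.refl u)
  obtain ⟨g, hg, rfl⟩ := hhom.exists_isOrderAut_apply_eq hlt u y
  have hyz : ∀ i, lt i (g u) (g v) ↔ lt i u v := fun i => (hg u v i).symm
  have hyz_ne : g u ≠ g v := g.injective.ne huv
  have hxz_of : ∀ i, (lt i x (g u) ↔ lt i u v) → (lt i x (g v) ↔ lt i x (g u)) := fun i hi =>
    rel_iff_of_rel_iff_rel hxy hyz_ne (hi.trans (hyz i).symm)
  have hxz_j : (lt j x (g v) ↔ lt j x (g u)) ∨ (lt j x (g v) ↔ lt j u v) := by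
    by_cases hj : lt j x (g u) ↔ lt j u v
    · exact Or.inl (hxz_of j hj)
    · tauto
  rcases hxz_j with hj | hj
  · have hxz : ∀ i, lt i x (g u) ↔ lt i x (g v) := fun i => by
      rcases eq_or_ne i j with rfl | hi
      · exact hj.symm
      · exact (hxz_of i (hagree i hi)).symm
    have hExz : E x (g v) := hEinv.of_forall_lt_iff hlt hhom hEe.refl hxy hxz hExy
    exact Or.inl ((hEinv g hg u v).mpr (hEe.trans (hEe.symm hExy) hExz))
  · have hxz : ∀ i, lt i u v ↔ lt i x (g v) := fun i => by
      rcases eq_or_ne i j with rfl | hi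
      · exact hj.symm
      · exact ((hxz_of i (hagree i hi)).trans (hagree i hi)).symm
    have hFxz : F x (g v) := hFinv.of_forall_lt_iff hlt hhom hFe.refl huv hxz hFuv
    exact Or.inr (hFe.trans hFxz (hFe.symm ((hFinv g hg u v).mp hFuv)))

end PermutationStructure

/-- an ultrahomogeneous 3-dimensional permutation structure has
no incomparable automorphism-invariant equivalence relations. -/
theorem stmt_18 {M : Type*} (lt : Fin 3 → M → M → Prop)
    (hlt : ∀ i, IsStrictTotalOrder M (lt i))
    (hhom : Ultrahomog lt)
    (E F : M → M → Prop) (hEe : Equivalence E) (hFe : Equivalence F)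
    (hEinv : ∀ g : M ≃ M, (∀ x y i, lt i x y ↔ lt i (g x) (g y)) →
      ∀ x y, E x y ↔ E (g x) (g y))
    (hFinv : ∀ g : M ≃ M, (∀ x y i, lt i x y ↔ lt i (g x) (g y)) →
      ∀ x y, F x y ↔ F (g x) (g y)) :
    (∀ x y, E x y → F x y) ∨ (∀ x y, F x y → E x y) := by
  by_contra! hcon
  obtain ⟨⟨x, y, hExy, hnFxy⟩, u, v, hFuv, hnEuv⟩ := hcon
  have huv : u ≠ v := by rintro rfl; exact hnEuv (hEe.refl u)
  obtain ⟨j, hj | hj⟩ := Fin.exists_forall_ne_or_forall_ne_not fun i => lt i x y ↔ lt i u v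
  · exact (hhom.rel_or_rel_of_types_agree_off hlt hEe hFe hEinv hFinv hExy hFuv j hj).elim
      hnEuv hnFxy
  · have hvu : ∀ i ≠ j, lt i x y ↔ lt i v u := fun i hi => by
      have := hlt i
      rw [rel_swap_iff_not_rel (r := lt i) huv]
      exact (not_iff_comm.mp (not_iff.mp (hj i hi))).symm
    exact (hhom.rel_or_rel_of_types_agree_off hlt hEe hFe hEinv hFinv hExy (hFe.symm hFuv) j
      hvu).elim (fun hEvu => hnEuv (hEe.symm hEvu)) hnFxy
end
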